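/- If Γ is a strongly connected digraph with dim(Γ) = |V(Γ)| − 2, then every arc of Γ is of type (1,1) or of type (1,2); that is, for every arc (x,y) of Γ one has ∂(y,x) ∈ {1, 2}. -/

import Mathlib

/-!  Common definitions for weak metric dimension of digraphs.

A digraph is modelled by a vertex type `V` together with an arc relation
`A : V → V → Prop` (simplicity is expressed by `Irreflexive A`). -/

/-- There is a directed walk of length `n` from `x` to `y`. -/
def walkLen {V : Type*} (A : V → V → Prop) : ℕ → V → V → Prop
  | 0 => fun x y => x = y
  | n + 1 => fun x y => ∃ z, A x z ∧ walkLen A n z y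

/-- `∂(x,y)`: the length of a shortest directed path from `x` to `y`. -/
noncomputable def ddist {V : Type*} (A : V → V → Prop) (x y : V) : ℕ :=
  sInf {n | walkLen A n x y}

/-- The two way distance `∂̃(x,y) = (∂(x,y), ∂(y,x))`. -/
noncomputable def twoDist {V : Type*} (A : V → V → Prop) (x y : V) : ℕ × ℕ :=
  (ddist A x y, ddist A y x)

/-- Strong connectivity: any vertex can be reached from any vertex by a directed walk. -/
def IsStronglyConnected {V : Type*} (A : V → V → Prop) : Prop :=
  ∀ x y : V, ∃ n, walkLen A n x y

/-- `S` is a weakly resolving set: distinct vertices have different tuples of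
two way distances from the vertices of `S`. -/
def IsWeaklyResolving {V : Type*} (A : V → V → Prop) (S : Set V) : Prop :=
  ∀ u v : V, (∀ w ∈ S, twoDist A w u = twoDist A w v) → u = v

/-- The weak metric dimension: minimum cardinality of a weakly resolving set. -/
noncomputable def wdim {V : Type*} [Fintype V] (A : V → V → Prop) : ℕ :=
  sInf {k | ∃ S : Finset V, S.card = k ∧ IsWeaklyResolving A ↑S}

/-- The diameter: the maximum of `∂(x,y)` over all ordered pairs of vertices. -/
noncomputable def diam {V : Type*} [Fintype V] (A : V → V → Prop) : ℕ :=
  sSup {m | ∃ x y : V, ddist A x y = m}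

/-- `f(n,d)`: the least positive integer `k` with `k + d^(2k) ≥ n`. -/
noncomputable def fnd (n d : ℕ) : ℕ :=
  sInf {k | 0 < k ∧ n ≤ k + d ^ (2 * k)}

/-- An isomorphism from `(V, A)` onto `(W, B)` exists. -/
def IsIsoTo {V W : Type*} (A : V → V → Prop) (B : W → W → Prop) : Prop :=
  ∃ e : V ≃ W, ∀ x y, A x y ↔ B (e x) (e y)

/-- The digraph of Example 2.3: vertices `v_1, …, v_n` are the elements
`0, …, n-1` of `Fin n` (so `v_i` is `i - 1`). -/
def egArc (n d : ℕ) : Fin n → Fin n → Prop := fun x y =>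
  (x.val = n - 1 ∧ y.val ≤ n - d) ∨
  (x.val ≤ n - d ∧ y.val = n - d + 1) ∨
  (n - d + 1 ≤ x.val ∧ x.val ≤ n - 2 ∧ y.val = x.val + 1)

/-- The `r`-th (0-based) coordinate of the tuple `v_{j+1}` in Construction 2.4;
it lies in `{1, …, d}` and `j = Σ_r (coord r - 1) d^r`. -/
def gcoord (d j r : ℕ) : ℕ := j / d ^ r % d + 1

/-- The arc relation of Construction 2.4, with the `u`-vertices `Fin k` on the left
and the `v`-vertices `Fin m` on the right of the sum. -/
def gammaArcKM (d k : ℕ) {m : ℕ} : Fin k ⊕ Fin m → Fin k ⊕ Fin m → Prop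
  | .inl _, .inl _ => False
  | .inl i, .inr j => gcoord d j.val (2 * i.val) = 1
  | .inr j, .inl i => gcoord d j.val (2 * i.val + 1) = 1
  | .inr j, .inr l => j ≠ l ∧ ∀ r < k,
      gcoord d l.val (2 * r) ≤ gcoord d j.val (2 * r) + 1 ∧
      gcoord d j.val (2 * r + 1) ≤ gcoord d l.val (2 * r + 1) + 1

/-- The arc relation of `Γ̄`: `Γ` of Construction 2.4 together with symmetric arcs
between any two distinct `u`-vertices. -/
def gammaBarArcKM (d k : ℕ) {m : ℕ} : Fin k ⊕ Fin m → Fin k ⊕ Fin m → Prop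
  | .inl i, .inl i' => i ≠ i'
  | x, y => gammaArcKM d k x y

/-- The directed cycle of length `m` on `Fin m`. -/
def cycArc (m : ℕ) [NeZero m] : Fin m → Fin m → Prop := fun x y => y = x + 1

/-- `σ` is an automorphism of the digraph `(V, A)`. -/
def IsDigraphAuto {V : Type*} (A : V → V → Prop) (σ : V ≃ V) : Prop :=
  ∀ a b, A a b ↔ A (σ a) (σ b)

/-- Vertex-transitivity. -/
def IsVertexTransitive {V : Type*} (A : V → V → Prop) : Prop :=
  ∀ x y : V, ∃ σ : V ≃ V, IsDigraphAuto A σ ∧ σ x = y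

/-- Weak distance-transitivity. -/
def IsWeaklyDistanceTransitive {V : Type*} (A : V → V → Prop) : Prop :=
  ∀ x y x' y' : V, twoDist A x y = twoDist A x' y' →
    ∃ σ : V ≃ V, IsDigraphAuto A σ ∧ σ x = x' ∧ σ y = y'

/-- Weak distance-regularity. -/
noncomputable def IsWeaklyDistanceRegular {V : Type*} (A : V → V → Prop) : Prop :=
  ∀ i j : ℕ × ℕ, (∃ a b : V, twoDist A a b = i) → (∃ a b : V, twoDist A a b = j) →
    ∀ x y x' y' : V, twoDist A x y = twoDist A x' y' →
      Set.ncard {z : V | twoDist A x z = i ∧ twoDist A z y = j} =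
      Set.ncard {z : V | twoDist A x' z = i ∧ twoDist A z y' = j}

/-- The complete digraph `K_t`. -/
def Krel (t : ℕ) : Fin t → Fin t → Prop := fun x y => x ≠ y

/-- The null digraph `K̄_t`. -/
def Nrel (t : ℕ) : Fin t → Fin t → Prop := fun _ _ => False

/-- The directed path `P_2` of length `1`. -/
def P2rel : Fin 2 → Fin 2 → Prop := fun x y => x = 0 ∧ y = 1

/-- The digraph `G_1` on `{0,1,2}` with arcs `(0,1),(1,2),(2,1),(2,0)`. -/
def G1rel : Fin 3 → Fin 3 → Prop := fun x y =>
  (x = 0 ∧ y = 1) ∨ (x = 1 ∧ y = 2) ∨ (x = 2 ∧ y = 1) ∨ (x = 2 ∧ y = 0)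

/-- The digraph `G_2` on `{0,1,2}` with arcs `(0,1),(1,0),(1,2),(2,1),(2,0)`. -/
def G2rel : Fin 3 → Fin 3 → Prop := fun x y =>
  (x = 0 ∧ y = 1) ∨ (x = 1 ∧ y = 0) ∨ (x = 1 ∧ y = 2) ∨ (x = 2 ∧ y = 1) ∨ (x = 2 ∧ y = 0)

/-- The generalized lexicographic product `G[H₀, H₁, H₂]` for a digraph `G` on `{0,1,2}`. -/
def glex3 {α β γ : Type*} (G : Fin 3 → Fin 3 → Prop)
    (H0 : α → α → Prop) (H1 : β → β → Prop) (H2 : γ → γ → Prop) :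
    α ⊕ β ⊕ γ → α ⊕ β ⊕ γ → Prop
  | .inl x, .inl y => H0 x y
  | .inl _, .inr (.inl _) => G 0 1
  | .inl _, .inr (.inr _) => G 0 2
  | .inr (.inl _), .inl _ => G 1 0
  | .inr (.inl x), .inr (.inl y) => H1 x y
  | .inr (.inl _), .inr (.inr _) => G 1 2
  | .inr (.inr _), .inl _ => G 2 0
  | .inr (.inr _), .inr (.inl _) => G 2 1
  | .inr (.inr x), .inr (.inr y) => H2 x y

/-- A clique in a digraph: the two way distance between any two distinct
vertices of `S` is `(1,1)`. -/
noncomputable def DClique {V : Type*} (A : V → V → Prop) (S : Set V) : Prop :=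
  ∀ u ∈ S, ∀ v ∈ S, u ≠ v → twoDist A u v = (1, 1)

/-- An independent set in a digraph: no arcs inside `R`. -/
def DIndependent {V : Type*} (A : V → V → Prop) (R : Set V) : Prop :=
  ∀ u ∈ R, ∀ v ∈ R, ¬ A u v

/-!
If `∂(y,x) = r`, walking along a shortest path from `y` to `x` yields vertices at distance
`1, …, r` to `x`. Removing these `r` vertices leaves a weakly resolving set, because the
remaining vertex `x` separates them by their distances to it, so `dim(Γ) ≤ |V(Γ)| - r`.
An arc `(x,y)` of type `(1,r)` with `r ≥ 3` therefore forces `dim(Γ) ≤ |V(Γ)| - 3`.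
-/

section Walks

variable {V : Type*} {A : V → V → Prop}

lemma ddist_le_of_walkLen {n : ℕ} {x y : V} (h : walkLen A n x y) : ddist A x y ≤ n :=
  Nat.sInf_le h

lemma walkLen_ddist (hsc : IsStronglyConnected A) (x y : V) :
    walkLen A (ddist A x y) x y :=
  Nat.sInf_mem (hsc x y)

lemma ddist_self (x : V) : ddist A x x = 0 :=
  Nat.le_zero.mp (ddist_le_of_walkLen (show walkLen A 0 x x from rfl))

lemma ddist_eq_zero_iff (hsc : IsStronglyConnected A) {x y : V} :
    ddist A x y = 0 ↔ x = y := by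
  refine ⟨fun h => ?_, fun h => h ▸ ddist_self x⟩
  have hw := walkLen_ddist hsc x y
  rwa [h] at hw

lemma exists_adj_ddist_eq_of_ddist_eq_succ (hsc : IsStronglyConnected A) {x y : V} {n : ℕ}
    (h : ddist A y x = n + 1) : ∃ z, A y z ∧ ddist A z x = n := by
  have hw := walkLen_ddist hsc y x
  rw [h] at hw
  obtain ⟨z, hyz, hzx⟩ := hw
  refine ⟨z, hyz, le_antisymm (ddist_le_of_walkLen hzx) ?_⟩
  have : ddist A y x ≤ ddist A z x + 1 :=
    ddist_le_of_walkLen ⟨z, hyz, walkLen_ddist hsc z x⟩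
  omega

lemma exists_ddist_eq_of_le_ddist (hsc : IsStronglyConnected A) {x y : V} {k : ℕ}
    (hk : k ≤ ddist A y x) : ∃ z, ddist A z x = k := by
  obtain ⟨n, hy⟩ : ∃ n, ddist A y x = n := ⟨_, rfl⟩
  induction n generalizing y with
  | zero => exact ⟨y, by omega⟩
  | succ n ih =>
    rcases Nat.lt_or_ge k (n + 1) with hlt | hge
    · obtain ⟨z, -, hz⟩ := exists_adj_ddist_eq_of_ddist_eq_succ hsc hy
      exact ih (by omega) hz
    · exact ⟨y, by omega⟩

lemma exists_finset_card_eq_ddist_injOn (hsc : IsStronglyConnected A) (x y : V) :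
    ∃ T : Finset V, T.card = ddist A y x ∧ x ∉ T ∧ Set.InjOn (ddist A · x) T := by
  classical
  choose f hf using fun k : Fin (ddist A y x) =>
    exists_ddist_eq_of_le_ddist hsc (y := y) (k := k + 1) k.isLt
  have hinj : Function.Injective f := fun i j hij =>
    Fin.ext (by simpa [hf] using congrArg (ddist A · x) hij)
  refine ⟨Finset.univ.image f, by rw [Finset.card_image_of_injective _ hinj]; simp, ?_, ?_⟩
  · simp only [Finset.mem_image, Finset.mem_univ, true_and, not_exists]
    intro k hk
    simpa [hk, ddist_self] using hf k
  · simp only [Finset.coe_image, Finset.coe_univ, Set.image_univ]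
    rintro _ ⟨i, rfl⟩ _ ⟨j, rfl⟩ hij
    exact congrArg f (Fin.ext (by simpa [hf] using hij))

lemma isWeaklyResolving_compl_of_injOn (hsc : IsStronglyConnected A) {T : Set V} {w : V}
    (hw : w ∉ T) (hinj : Set.InjOn (ddist A · w) T) : IsWeaklyResolving A Tᶜ := by
  have mem_of_agree :
      ∀ {a b : V}, a ≠ b → (∀ c ∈ Tᶜ, twoDist A c a = twoDist A c b) → a ∈ T := by
    intro a b hab h
    by_contra ha
    have := congrArg Prod.fst (h a ha)
    simp only [twoDist, ddist_self] at this
    exact hab ((ddist_eq_zero_iff hsc).mp this.symm)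
  intro u v huv
  by_contra hne
  have hu := mem_of_agree hne huv
  have hv := mem_of_agree (Ne.symm hne) fun a ha => (huv a ha).symm
  exact hne (hinj hu hv (congrArg Prod.snd (huv w hw)))

end Walks

section Dimension

variable {V : Type*} [Fintype V] {A : V → V → Prop}

lemma wdim_le_card {S : Finset V} (hS : IsWeaklyResolving A S) : wdim A ≤ S.card :=
  Nat.sInf_le ⟨S, rfl, hS⟩

lemma ddist_lt_card (hsc : IsStronglyConnected A) (x y : V) :
    ddist A y x < Fintype.card V := by
  classical
  obtain ⟨T, hcard, hx, -⟩ := exists_finset_card_eq_ddist_injOn hsc x y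
  have := (insert x T).card_le_univ
  rw [Finset.card_insert_of_notMem hx] at this
  omega

lemma wdim_le_card_sub_ddist (hsc : IsStronglyConnected A) (x y : V) :
    wdim A ≤ Fintype.card V - ddist A y x := by
  classical
  obtain ⟨T, hcard, hx, hinj⟩ := exists_finset_card_eq_ddist_injOn hsc x y
  calc wdim A ≤ Tᶜ.card :=
        wdim_le_card (by rw [Finset.coe_compl]; exact isWeaklyResolving_compl_of_injOn hsc hx hinj)
    _ = Fintype.card V - ddist A y x := by rw [Finset.card_compl, hcard]

end Dimension

/-- Lemma 4.6. If `dim(Γ) = |V(Γ)| - 2`, then every arc of `Γ`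
is of type `(1,1)` or `(1,2)`. -/
theorem arc_type_of_dim_card_sub_two {V : Type*} [Fintype V] (A : V → V → Prop)
    (hirr : Irreflexive A) (hsc : IsStronglyConnected A)
    (hdim : wdim A = Fintype.card V - 2) :
    ∀ x y : V, A x y → ddist A y x = 1 ∨ ddist A y x = 2 := by
  intro x y hxy
  have hpos : ddist A y x ≠ 0 := by
    rw [Ne, ddist_eq_zero_iff hsc]
    rintro rfl
    exact hirr y hxy
  have hwdim := wdim_le_card_sub_ddist hsc x y
  have hcard := ddist_lt_card hsc x y
  omega
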